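/- arXiv:2305.16354 — 2 statements merged into one kernel-verified Lean document; each statement's English description precedes it below -/
import Mathlib

section
/- Let M be an {S,Q}-complete matroid on ground set S⊎Q (S, Q disjoint finite sets), and let S'' ⊆ S' ⊆ S and Q'' ⊆ Q' ⊆ Q. Then the minor M∘(S'⊎Q')×(S''⊎Q''), obtained from M by restricting to S'⊎Q' and then contracting to S''⊎Q'', is {S'',Q''}-complete. -/
open Matroid Set

variable {α : Type*}

/-- The contraction `M × T` of a matroid to the set `T` (i.e. the contraction of the
complement of `T`), defined via the standard identity `M × T = (M✶ ↾ T)✶`. -/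
def Matroid.conTo (M : Matroid α) (T : Set α) : Matroid α := (M✶ ↾ T)✶

/-- A matroid `M` on the ground set `S ⊎ Q` is `{S,Q}`-complete if whenever
`b_S ∪ b_Q`, `b_S ∪ b'_Q` and `b'_S ∪ b_Q` are bases of `M` (with `b_S, b'_S ⊆ S` and
`b_Q, b'_Q ⊆ Q`), so is `b'_S ∪ b'_Q`. -/
def Matroid.SQComplete (M : Matroid α) (S Q : Set α) : Prop :=
  ∀ bS bS' bQ bQ' : Set α, bS ⊆ S → bS' ⊆ S → bQ ⊆ Q → bQ' ⊆ Q →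
    M.IsBase (bS ∪ bQ) → M.IsBase (bS ∪ bQ') → M.IsBase (bS' ∪ bQ) → M.IsBase (bS' ∪ bQ')

/-!
Complementation in `S ∪ Q` acts separately on the `S`- and `Q`-parts of a base, so duality
preserves `{S,Q}`-completeness; since `M × T = (M✶ ↾ T)✶`, it remains to treat restrictions.
For a restriction to `R`, extend one base `I` of `M ↾ R` to a base `I ∪ X` of `M` with `X`
disjoint from `R`. The bases of `M ↾ R` are then exactly the sets `J ⊆ R` for which `J ∪ X` is
a base of `M`, and splitting `X` into its `S`- and `Q`-parts transfers completeness from `M`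
to `M ↾ R`.
-/

lemma Set.union_sdiff_union_of_disjoint {S Q a b : Set α} (hSQ : Disjoint S Q) (ha : a ⊆ S)
    (hb : b ⊆ Q) : (S ∪ Q) \ (a ∪ b) = S \ a ∪ Q \ b := by
  tauto_set

namespace Matroid

variable {M : Matroid α} {I J R X S Q S' Q' : Set α}

lemma IsBasis.isBase_union_iff_isBase_union (hI : M.IsBasis I R) (hJ : M.IsBasis J R)
    (hRX : Disjoint R X) : M.IsBase (I ∪ X) ↔ M.IsBase (J ∪ X) := by
  -- both sides say that `X` is independent in `M ／ R`
  have hindep : M.Indep (X ∪ I) ↔ M.Indep (X ∪ J) := by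
    have hIc := hI.contract_indep_iff (J := X)
    have hJc := hJ.contract_indep_iff (J := X)
    rw [and_iff_left hRX] at hIc hJc
    exact hIc.symm.trans hJc
  rw [isBase_iff_indep_closure_eq, isBase_iff_indep_closure_eq, union_comm I, union_comm J,
    hindep, closure_union_congr_right (hI.closure_eq_closure.trans hJ.closure_eq_closure.symm)]

lemma IsBasis.isBasis_iff_isBase_union (hI : M.IsBasis I R) (hRX : Disjoint R X)
    (hIX : M.IsBase (I ∪ X)) (hJR : J ⊆ R) : M.IsBasis J R ↔ M.IsBase (J ∪ X) := by
  refine ⟨fun hJ ↦ (hI.isBase_union_iff_isBase_union hJ hRX).1 hIX, fun hJX ↦ ?_⟩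
  obtain ⟨J', hJ', hJJ'⟩ :=
    (hJX.indep.subset subset_union_left).subset_isBasis_of_subset hJR hI.subset_ground
  have hJ'X : M.IsBase (J' ∪ X) := (hI.isBase_union_iff_isBase_union hJ' hRX).1 hIX
  have hunion : J ∪ X = J' ∪ X := hJX.eq_of_subset_isBase hJ'X (union_subset_union_left X hJJ')
  have hJ'J : J' ⊆ J := fun x hx ↦
    (hunion ▸ Or.inl hx : x ∈ J ∪ X).resolve_right (disjoint_left.1 hRX (hJ'.subset hx))
  rwa [hJJ'.antisymm hJ'J]

lemma SQComplete.restrict (hM : M.SQComplete S Q) (hE : M.E = S ∪ Q) (hS' : S' ⊆ S)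
    (hQ' : Q' ⊆ Q) : (M ↾ (S' ∪ Q')).SQComplete S' Q' := by
  have hR : S' ∪ Q' ⊆ M.E := hE ▸ union_subset_union hS' hQ'
  intro bS bS' bQ bQ' hbS hbS' hbQ hbQ' h₁ h₂ h₃
  rw [isBase_restrict_iff hR] at h₁ h₂ h₃ ⊢
  obtain ⟨B, hB, hB₁⟩ := h₁.exists_isBase
  set X := B \ (S' ∪ Q')
  have hX : X ∩ S ∪ X ∩ Q = X := by
    rw [← inter_union_distrib_left,
      inter_eq_self_of_subset_left (hE ▸ sdiff_subset.trans hB.subset_ground)]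
  have hbasis_iff {a b : Set α} (ha : a ⊆ S') (hb : b ⊆ Q') :
      M.IsBasis (a ∪ b) (S' ∪ Q') ↔ M.IsBase ((a ∪ X ∩ S) ∪ (b ∪ X ∩ Q)) := by
    rw [union_union_union_comm, hX, h₁.isBasis_iff_isBase_union disjoint_sdiff_right
      (by rwa [hB₁, inter_union_sdiff]) (union_subset_union ha hb)]
  rw [hbasis_iff hbS hbQ] at h₁
  rw [hbasis_iff hbS hbQ'] at h₂
  rw [hbasis_iff hbS' hbQ] at h₃
  rw [hbasis_iff hbS' hbQ']
  exact hM _ _ _ _ (union_subset (hbS.trans hS') inter_subset_right)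
    (union_subset (hbS'.trans hS') inter_subset_right)
    (union_subset (hbQ.trans hQ') inter_subset_right)
    (union_subset (hbQ'.trans hQ') inter_subset_right) h₁ h₂ h₃

lemma SQComplete.dual (hM : M.SQComplete S Q) (hSQ : Disjoint S Q) (hE : M.E = S ∪ Q) :
    M✶.SQComplete S Q := by
  intro bS bS' bQ bQ' hbS hbS' hbQ hbQ'
  have hcompl {a b : Set α} (ha : a ⊆ S) (hb : b ⊆ Q) :
      M✶.IsBase (a ∪ b) ↔ M.IsBase (S \ a ∪ Q \ b) := by
    rw [dual_isBase_iff (hE ▸ union_subset_union ha hb), hE,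
      Set.union_sdiff_union_of_disjoint hSQ ha hb]
  rw [hcompl hbS hbQ, hcompl hbS hbQ', hcompl hbS' hbQ, hcompl hbS' hbQ']
  exact hM _ _ _ _ sdiff_subset sdiff_subset sdiff_subset sdiff_subset

end Matroid

theorem sqComplete_minor_general (M : Matroid α) (S Q S' S'' Q' Q'' : Set α)
    (hdisj : Disjoint S Q) (hE : M.E = S ∪ Q) (hM : M.SQComplete S Q)
    (hS'' : S'' ⊆ S') (hS' : S' ⊆ S) (hQ'' : Q'' ⊆ Q') (hQ' : Q' ⊆ Q) :
    ((M ↾ (S' ∪ Q')).conTo (S'' ∪ Q'')).SQComplete S'' Q'' := by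
  have hN := (hM.restrict hE hS' hQ').dual (hdisj.mono hS' hQ') rfl
  exact (hN.restrict rfl hS'' hQ'').dual (hdisj.mono (hS''.trans hS') (hQ''.trans hQ')) rfl

/-- any minor `M∘(S'⊎Q')×(S''⊎Q'')` of an `{S,Q}`-complete matroid,
with `S'' ⊆ S' ⊆ S` and `Q'' ⊆ Q' ⊆ Q`, is `{S'',Q''}`-complete. -/
theorem sqComplete_minor (M : Matroid α) [M.Finite] (S Q S' S'' Q' Q'' : Set α)
    (hdisj : Disjoint S Q) (hE : M.E = S ∪ Q) (hM : M.SQComplete S Q)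
    (hS'' : S'' ⊆ S') (hS' : S' ⊆ S) (hQ'' : Q'' ⊆ Q') (hQ' : Q' ⊆ Q) :
    ((M ↾ (S' ∪ Q')).conTo (S'' ∪ Q'')).SQComplete S'' Q'' :=
  sqComplete_minor_general M S Q S' S'' Q' Q'' hdisj hE hM hS'' hS' hQ'' hQ'
end

section
/- Let S, Q be disjoint finite sets, let M_S, M_Q be matroids on S, Q respectively, and let k be an integer with max(r(M_S), r(M_Q)) ≤ k ≤ r(M_S) + r(M_Q). Let B be the collection of all subsets of S⊎Q of the form I_S ∪ I_Q where I_S ⊆ S is independent in M_S, I_Q ⊆ Q is independent in M_Q, and |I_S| + |I_Q| = k. Then: (1) B is the base family of a matroid M_SQ on S⊎Q (i.e., B is nonempty and satisfies the base exchange axiom), and M_SQ is {S,Q}-complete; (2) M_SQ∘S = M_S, M_SQ∘Q = M_Q, and r(M_S) + r(M_Q) − k = r(M_SQ∘S) − r(M_SQ×S). -/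
/-! The matroid is the truncation to rank `k` of the direct sum `M_S ⊕ M_Q`, whose independent
sets are the independent sets of the sum with at most `k` elements. As `k ≤ r(M_S) + r(M_Q)`, its
bases are the independent sets `I_S ∪ I_Q` of the sum with `|I_S| + |I_Q| = k`, and completeness
holds because this condition only sees the two cardinalities. As `k ≥ r(M_S), r(M_Q)`, truncating
does not change the restrictions to `S` and `Q`. Finally `M × S = M / Q` has rank
`r(M) - r_M(Q) = k - r(M_Q)`. -/

open Matroid Set

variable {α : Type*}

/-- The rank of a set `X` in a matroid `M`: the size of a maximal independent
subset of `X`. -/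
noncomputable def Matroid.rnk (M : Matroid α) (X : Set α) : ℕ :=
  sSup {n | ∃ I, M.Indep I ∧ I ⊆ X ∧ I.ncard = n}

lemma Set.union_inter_eq_left_of_disjoint {I J X Y : Set α} (hXY : Disjoint X Y) (hI : I ⊆ X)
    (hJ : J ⊆ Y) : (I ∪ J) ∩ X = I := by
  rw [union_inter_distrib_right, inter_eq_self_of_subset_left hI,
    (hXY.mono_right hJ).symm.inter_eq, union_empty]

lemma Set.union_inter_eq_right_of_disjoint {I J X Y : Set α} (hXY : Disjoint X Y) (hI : I ⊆ X)
    (hJ : J ⊆ Y) : (I ∪ J) ∩ Y = J := by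
  rw [union_comm, union_inter_eq_left_of_disjoint hXY.symm hJ hI]

namespace Matroid

variable {M N : Matroid α} {B I J X S Q : Set α} {k : ℕ}

lemma rnk_eq_of_forall_le {n : ℕ} (h_ex : ∃ I, M.Indep I ∧ I ⊆ X ∧ I.ncard = n)
    (h_le : ∀ I, M.Indep I → I ⊆ X → I.ncard ≤ n) : M.rnk X = n := by
  have h_ub : n ∈ upperBounds {m | ∃ I, M.Indep I ∧ I ⊆ X ∧ I.ncard = m} := by
    rintro m ⟨I, hI, hIX, rfl⟩
    exact h_le I hI hIX
  exact le_antisymm (csSup_le ⟨n, h_ex⟩ h_ub) (le_csSup ⟨n, h_ub⟩ h_ex)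

lemma cast_rnk_eq_eRk [M.RankFinite] (X : Set α) : (M.rnk X : ℕ∞) = M.eRk X := by
  obtain ⟨I, hI⟩ := M.exists_isBasis' X
  rw [← hI.encard_eq_eRk, ← hI.indep.finite.cast_ncard_eq, Nat.cast_inj]
  refine rnk_eq_of_forall_le ⟨I, hI.indep, hI.subset, rfl⟩ fun J hJ hJX => ?_
  have hJI := hJ.encard_le_eRk_of_subset hJX
  rwa [← hI.encard_eq_eRk, ← hI.indep.finite.cast_ncard_eq, ← hJ.finite.cast_ncard_eq,
    Nat.cast_le] at hJI

lemma cast_rnk_ground_eq_eRank [M.RankFinite] : (M.rnk M.E : ℕ∞) = M.eRank := by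
  rw [cast_rnk_eq_eRk, eRk_ground]

lemma eRank_contract_add_eRk (M : Matroid α) (C : Set α) :
    (M ／ C).eRank + M.eRk C = M.eRank := by
  obtain ⟨I, hI⟩ := M.exists_isBasis' C
  obtain ⟨B, hB, hIB⟩ := hI.indep.exists_isBase_superset
  have hBC : B ∩ C = I :=
    (hI.eq_of_subset_indep (hB.indep.inter_right C) (subset_inter hIB hI.subset)
      inter_subset_right).symm
  have hBsplit : B \ C ∪ I = B := by rw [← hBC, sdiff_union_inter]
  have hcontract : (M ／ C).IsBase (B \ C) := by
    have h := hB.isBasis_ground.isBasis'.contract_isBasis' hI (by rw [hBsplit]; exact hB.indep)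
    rwa [← contract_ground, isBasis'_iff_isBasis, isBasis_ground_iff] at h
  rw [← hcontract.encard_eq_eRank, ← hI.encard_eq_eRk, ← encard_union_eq
    (disjoint_sdiff_left.mono_right hI.subset), hBsplit, hB.encard_eq_eRank]

lemma conTo_eq_contract (hS : S ⊆ M.E) : M.conTo S = M ／ (M.E \ S) := by
  rw [conTo, ← dual_delete_dual, ← restrict_compl, dual_ground, sdiff_sdiff_cancel_left hS]

lemma disjointSum_indep_union_iff {h : Disjoint M.E N.E} (hI : I ⊆ M.E) (hJ : J ⊆ N.E) :
    (M.disjointSum N h).Indep (I ∪ J) ↔ M.Indep I ∧ N.Indep J := by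
  rw [disjointSum_indep_iff, union_inter_eq_left_of_disjoint h hI hJ,
    union_inter_eq_right_of_disjoint h hI hJ, and_iff_left (union_subset_union hI hJ)]

lemma disjointSum_restrict_left {h : Disjoint M.E N.E} : M.disjointSum N h ↾ M.E = M := by
  refine ext_indep rfl fun I hI => ?_
  have h_union := disjointSum_indep_union_iff (h := h) hI (empty_subset N.E)
  rw [union_empty, and_iff_left N.empty_indep] at h_union
  rw [restrict_indep_iff, and_iff_left (show I ⊆ M.E from hI), h_union]

lemma eRank_disjointSum {h : Disjoint M.E N.E} :
    (M.disjointSum N h).eRank = M.eRank + N.eRank := by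
  obtain ⟨B, hB⟩ := M.exists_isBase
  obtain ⟨B', hB'⟩ := N.exists_isBase
  have hsum : (M.disjointSum N h).IsBase (B ∪ B') := by
    rw [disjointSum_isBase_iff,
      union_inter_eq_left_of_disjoint h hB.subset_ground hB'.subset_ground,
      union_inter_eq_right_of_disjoint h hB.subset_ground hB'.subset_ground]
    exact ⟨hB, hB', union_subset_union hB.subset_ground hB'.subset_ground⟩
  rw [← hsum.encard_eq_eRank, encard_union_eq (h.mono hB.subset_ground hB'.subset_ground),
    hB.encard_eq_eRank, hB'.encard_eq_eRank]

def truncateTo (N : Matroid α) (k : ℕ) : Matroid α :=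
  (IndepMatroid.ofBddAugment N.E (fun I => N.Indep I ∧ I.encard ≤ k)
    ⟨N.empty_indep, by simp⟩
    (fun _ _ hJ hIJ => ⟨hJ.1.subset hIJ, (encard_mono hIJ).trans hJ.2⟩)
    (by
      rintro I J ⟨hI, -⟩ ⟨hJ, hJk⟩ hlt
      obtain ⟨e, he, hi⟩ := hI.augment hJ hlt
      have hltk := hlt.trans_le hJk
      refine ⟨e, he.1, he.2, hi, ?_⟩
      rw [encard_insert_of_notMem he.2]
      exact (ENat.add_one_le_iff hltk.ne_top).2 hltk)
    ⟨k, fun _ hI => hI.2⟩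
    (fun _ hI => hI.1.subset_ground)).matroid

@[simp] lemma truncateTo_ground (N : Matroid α) (k : ℕ) : (N.truncateTo k).E = N.E := rfl

@[simp] lemma truncateTo_indep_iff : (N.truncateTo k).Indep I ↔ N.Indep I ∧ I.encard ≤ k := by
  simp [truncateTo]

instance truncateTo_rankFinite (N : Matroid α) (k : ℕ) : (N.truncateTo k).RankFinite := by
  unfold truncateTo; infer_instance

lemma eRank_truncateTo (hk : k ≤ N.eRank) : (N.truncateTo k).eRank = k := by
  rw [eRank_def, le_eRk_iff] at hk
  obtain ⟨J, -, hJ, hJk⟩ := hk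
  obtain ⟨B, hB, hJB⟩ := (truncateTo_indep_iff.2 ⟨hJ, hJk.le⟩).exists_isBase_superset
  rw [← hB.encard_eq_eRank]
  exact le_antisymm (truncateTo_indep_iff.1 hB.indep).2 (hJk ▸ encard_mono hJB)

lemma truncateTo_isBase_iff (hk : k ≤ N.eRank) :
    (N.truncateTo k).IsBase B ↔ N.Indep B ∧ B.encard = k := by
  rw [← eRank_truncateTo hk]
  refine ⟨fun hB => ⟨(truncateTo_indep_iff.1 hB.indep).1, hB.encard_eq_eRank⟩,
    fun ⟨hB, hBk⟩ => ?_⟩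
  have hBt : (N.truncateTo k).Indep B :=
    truncateTo_indep_iff.2 ⟨hB, by rw [hBk, eRank_truncateTo hk]⟩
  exact hBt.isBase_of_eRk_ge hBt.finite (by rw [hBt.eRk_eq_encard, hBk])

lemma truncateTo_restrict_eq (h : N.eRk X ≤ k) : N.truncateTo k ↾ X = N ↾ X := by
  refine ext_indep rfl fun I _ => ?_
  simp only [restrict_indep_iff, truncateTo_indep_iff]
  exact ⟨fun ⟨⟨hI, _⟩, hIX⟩ => ⟨hI, hIX⟩,
    fun ⟨hI, hIX⟩ => ⟨⟨hI, (hI.encard_le_eRk_of_subset hIX).trans h⟩, hIX⟩⟩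

lemma truncateTo_disjointSum_restrict_left {h : Disjoint M.E N.E} (hk : M.eRank ≤ k) :
    (M.disjointSum N h).truncateTo k ↾ M.E = M := by
  rw [truncateTo_restrict_eq, disjointSum_restrict_left]
  rwa [← eRank_restrict, disjointSum_restrict_left]

lemma truncateTo_disjointSum_restrict_right {h : Disjoint M.E N.E} (hk : N.eRank ≤ k) :
    (M.disjointSum N h).truncateTo k ↾ N.E = N := by
  rw [disjointSum_comm]
  exact truncateTo_disjointSum_restrict_left hk

lemma truncateTo_disjointSum_isBase_union_iff [M.RankFinite] [N.RankFinite]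
    {h : Disjoint M.E N.E} (hk : k ≤ M.eRank + N.eRank) (hI : I ⊆ M.E) (hJ : J ⊆ N.E) :
    ((M.disjointSum N h).truncateTo k).IsBase (I ∪ J) ↔
      M.Indep I ∧ N.Indep J ∧ I.ncard + J.ncard = k := by
  rw [truncateTo_isBase_iff (eRank_disjointSum ▸ hk), disjointSum_indep_union_iff hI hJ,
    encard_union_eq (h.mono hI hJ), and_assoc]
  refine and_congr_right fun hIi => and_congr_right fun hJi => ?_
  rw [← hIi.finite.cast_ncard_eq, ← hJi.finite.cast_ncard_eq]
  norm_cast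

lemma cast_rnk_conTo_add_eRank_restrict [M.RankFinite] (hE : M.E = S ∪ Q) (hSQ : Disjoint S Q) :
    ((M.conTo S).rnk S : ℕ∞) + (M ↾ Q).eRank = M.eRank := by
  have hQ : M.E \ S = Q := by rw [hE, union_sdiff_cancel_left hSQ.inter_eq.subset]
  have hS : (M ／ Q).E = S := by
    rw [contract_ground, hE, union_sdiff_cancel_right hSQ.inter_eq.subset]
  rw [conTo_eq_contract (hE ▸ subset_union_left), hQ, cast_rnk_eq_eRk, eRk_eq_eRank hS.subset,
    eRank_restrict, eRank_contract_add_eRk]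

lemma isBase_iff_exists_of_isBase_union_iff {P : Set α → Set α → Prop} (hE : M.E = S ∪ Q)
    (h : ∀ I J, I ⊆ S → J ⊆ Q → (M.IsBase (I ∪ J) ↔ P I J)) :
    M.IsBase B ↔ ∃ I J, I ⊆ S ∧ J ⊆ Q ∧ P I J ∧ B = I ∪ J := by
  refine ⟨fun hB => ?_, fun ⟨I, J, hI, hJ, hP, hBIJ⟩ => hBIJ ▸ (h I J hI hJ).2 hP⟩
  have hBsplit : B = B ∩ S ∪ B ∩ Q := by
    rw [← inter_union_distrib_left, ← hE, inter_eq_self_of_subset_left hB.subset_ground]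
  exact ⟨_, _, inter_subset_right, inter_subset_right,
    (h _ _ inter_subset_right inter_subset_right).1 (hBsplit ▸ hB), hBsplit⟩

lemma sqComplete_of_isBase_union_iff {P R : Set α → Prop}
    (h : ∀ I J, I ⊆ S → J ⊆ Q →
      (M.IsBase (I ∪ J) ↔ P I ∧ R J ∧ I.ncard + J.ncard = k)) :
    M.SQComplete S Q := by
  intro bS bS' bQ bQ' hS hS' hQ hQ' h₁ h₂ h₃
  obtain ⟨-, -, hc₁⟩ := (h _ _ hS hQ).1 h₁
  obtain ⟨-, hRQ', hc₂⟩ := (h _ _ hS hQ').1 h₂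
  obtain ⟨hPS', -, hc₃⟩ := (h _ _ hS' hQ).1 h₃
  exact (h _ _ hS' hQ').2 ⟨hPS', hRQ', by omega⟩

end Matroid

/-- given matroids `M_S`, `M_Q` on disjoint sets `S`, `Q` and
`max(r(M_S), r(M_Q)) ≤ k ≤ r(M_S) + r(M_Q)`, the unions `I_S ∪ I_Q` of independent sets
with `|I_S| + |I_Q| = k` form the base family of an `{S,Q}`-complete matroid `M_SQ` with
`M_SQ∘S = M_S`, `M_SQ∘Q = M_Q` and `r(M_S) + r(M_Q) − k = r(M_SQ∘S) − r(M_SQ×S)`. -/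
theorem rank_based_union_matroid (S Q : Set α) (hdisj : Disjoint S Q)
    (M_S M_Q : Matroid α) [M_S.Finite] [M_Q.Finite] (hES : M_S.E = S) (hEQ : M_Q.E = Q)
    (k : ℕ) (hk₁ : max (M_S.rnk S) (M_Q.rnk Q) ≤ k) (hk₂ : k ≤ M_S.rnk S + M_Q.rnk Q) :
    ∃ M : Matroid α, M.E = S ∪ Q ∧
      (∀ b : Set α, M.IsBase b ↔ ∃ I J : Set α, I ⊆ S ∧ J ⊆ Q ∧
        M_S.Indep I ∧ M_Q.Indep J ∧ I.ncard + J.ncard = k ∧ b = I ∪ J) ∧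
      M.SQComplete S Q ∧
      M ↾ S = M_S ∧ M ↾ Q = M_Q ∧
      ((M_S.rnk S : ℤ) + M_Q.rnk Q - k = ((M ↾ S).rnk S : ℤ) - (M.conTo S).rnk S) := by
  subst hES hEQ
  have hrS : (M_S.rnk M_S.E : ℕ∞) = M_S.eRank := cast_rnk_ground_eq_eRank
  have hrQ : (M_Q.rnk M_Q.E : ℕ∞) = M_Q.eRank := cast_rnk_ground_eq_eRank
  obtain ⟨hkS, hkQ⟩ := max_le_iff.1 hk₁
  have hk : (k : ℕ∞) ≤ M_S.eRank + M_Q.eRank := by rw [← hrS, ← hrQ]; exact_mod_cast hk₂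
  set M := (M_S.disjointSum M_Q hdisj).truncateTo k
  have hME : M.E = M_S.E ∪ M_Q.E := by simp [M]
  have hbase_union (I J : Set α) (hI : I ⊆ M_S.E) (hJ : J ⊆ M_Q.E) :=
    truncateTo_disjointSum_isBase_union_iff (h := hdisj) hk hI hJ
  have hMS : M ↾ M_S.E = M_S :=
    truncateTo_disjointSum_restrict_left (by rw [← hrS]; exact_mod_cast hkS)
  have hMQ : M ↾ M_Q.E = M_Q :=
    truncateTo_disjointSum_restrict_right (by rw [← hrQ]; exact_mod_cast hkQ)
  have hcon := cast_rnk_conTo_add_eRank_restrict hME hdisj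
  rw [hMQ, ← hrQ, eRank_truncateTo (eRank_disjointSum ▸ hk)] at hcon
  norm_cast at hcon
  refine ⟨M, hME, fun b => ?_, sqComplete_of_isBase_union_iff hbase_union, hMS, hMQ, ?_⟩
  · simpa only [and_assoc] using isBase_iff_exists_of_isBase_union_iff hME hbase_union
  · rw [hMS]
    omega
end
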